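/- arXiv:1404.1868 — 3 statements merged into one kernel-verified Lean document; each statement's English description precedes it below -/
import Mathlib

section
/- If m is an n×n Metzler matrix (all off-diagonal entries nonnegative) and x is a solution of the ODE x'(s) = M(s) x(s) with x(0) in the nonnegative orthant, where M is a measurable control taking values in a set of Metzler matrices, then x(s) remains in the nonnegative orthant for all s ≥ 0. -/
open Matrix Set Filter
open scoped Topology

/-- A Metzler matrix: all off-diagonal entries are nonnegative. -/
def IsMetzler {n : ℕ} (m : Matrix (Fin n) (Fin n) ℝ) : Prop :=
  ∀ i j, i ≠ j → 0 ≤ m i j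

/-- Right slope limit of the negative part `max (-(x z)) 0` of a differentiable function. -/
lemma slope_negpart_tendsto {x : ℝ → ℝ} {s d : ℝ} (hx : HasDerivAt x d s) :
    Tendsto (fun z => (z - s)⁻¹ * (max (-(x z)) 0 - max (-(x s)) 0)) (𝓝[>] s)
      (𝓝 (if x s < 0 then -d else if x s = 0 then max (-d) 0 else 0)) := by
  have hslope : Tendsto (fun z => (z - s)⁻¹ * (x z - x s)) (𝓝[>] s) (𝓝 d) := by
    have h := hasDerivAt_iff_tendsto_slope.1 hx
    have h' := h.mono_left (nhdsWithin_mono s (fun z hz => ne_of_gt hz))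
    refine h'.congr fun z => ?_
    simp [slope_def_field, div_eq_inv_mul]
  rcases lt_trichotomy (x s) 0 with hlt | heq | hgt
  · rw [if_pos hlt]
    have hev : ∀ᶠ z in 𝓝[>] s, x z < 0 := by
      have : ∀ᶠ z in 𝓝 s, x z < 0 :=
        hx.continuousAt.eventually_lt continuousAt_const hlt
      exact this.filter_mono nhdsWithin_le_nhds
    have := hslope.neg
    rw [show -d = (-1 : ℝ) * d by ring] at *
    refine Tendsto.congr' ?_ (hslope.const_mul (-1))
    filter_upwards [hev] with z hz
    rw [max_eq_left (by linarith : (0:ℝ) ≤ -(x z)), max_eq_left (by linarith : (0:ℝ) ≤ -(x s))]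
    ring
  · rw [if_neg (by simp [heq]), if_pos heq]
    have : Tendsto (fun z => max (-((z - s)⁻¹ * (x z - x s))) 0) (𝓝[>] s)
        (𝓝 (max (-d) 0)) := (hslope.neg).max tendsto_const_nhds
    refine Tendsto.congr' ?_ this
    filter_upwards [self_mem_nhdsWithin] with z hz
    have hzs : (0:ℝ) < z - s := sub_pos.2 hz
    rw [heq, neg_zero, max_eq_right le_rfl, sub_zero, sub_zero,
      mul_max_of_nonneg _ _ (le_of_lt (inv_pos.2 hzs)), mul_zero, mul_neg]
  · rw [if_neg (by linarith), if_neg (by linarith)]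
    have hev : ∀ᶠ z in 𝓝[>] s, 0 < x z := by
      have : ∀ᶠ z in 𝓝 s, 0 < x z :=
        continuousAt_const.eventually_lt hx.continuousAt hgt
      exact this.filter_mono nhdsWithin_le_nhds
    refine Tendsto.congr' ?_ tendsto_const_nhds
    filter_upwards [hev] with z hz
    rw [max_eq_right (by linarith : -(x z) ≤ 0), max_eq_right (by linarith : -(x s) ≤ 0)]
    ring

/-- Invariance of the nonnegative orthant under the flow of `ẋ = M(s) x`,
where `M` is a measurable bounded control taking Metzler values. -/
theorem nonneg_orthant_invariant {n : ℕ} (t : ℝ) (ht : 0 < t)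
    (M : ℝ → Matrix (Fin n) (Fin n) ℝ)
    (hMmeas : ∀ i j, Measurable fun s => M s i j)
    (hMbdd : ∃ C : ℝ, ∀ s ∈ Icc 0 t, ∀ i j, |M s i j| ≤ C)
    (hMetzler : ∀ s ∈ Icc 0 t, IsMetzler (M s))
    (x : ℝ → Fin n → ℝ)
    (hode : ∀ s ∈ Icc 0 t, HasDerivAt x ((M s).mulVec (x s)) s)
    (hx0 : ∀ i, 0 ≤ x 0 i) :
    ∀ s ∈ Icc 0 t, ∀ i, 0 ≤ x s i := by
  obtain ⟨C₀, hC₀⟩ := hMbdd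
  set C : ℝ := max C₀ 0 with hCdef
  have hCnn : (0:ℝ) ≤ C := le_max_right _ _
  have hC : ∀ s ∈ Icc 0 t, ∀ i j, |M s i j| ≤ C := fun s hs i j =>
    (hC₀ s hs i j).trans (le_max_left _ _)
  set g : ℝ → ℝ := fun z => ∑ i, max (-(x z i)) 0 with hgdef
  have hgnn : ∀ z, 0 ≤ g z := fun z =>
    Finset.sum_nonneg fun i _ => le_max_right _ _
  have hcontx : ContinuousOn x (Icc 0 t) := fun s hs =>
    (hode s hs).continuousAt.continuousWithinAt
  have hcontg : ContinuousOn g (Icc 0 t) := by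
    apply continuousOn_finset_sum
    intro i _
    intro s hs
    exact (((continuous_apply i).continuousAt.comp_continuousWithinAt
      (hcontx s hs)).neg).max continuousWithinAt_const
  -- slope condition for Grönwall
  have key : ∀ s ∈ Icc 0 t, g s ≤ gronwallBound 0 (n * C) 0 (s - 0) := by
    apply le_gronwallBound_of_liminf_deriv_right_le (f' := fun s => (n * C) * g s) hcontg
    · intro s hs r hr
      have hsIcc : s ∈ Icc 0 t := Ico_subset_Icc_self hs
      set d : Fin n → ℝ := (M s).mulVec (x s) with hddef
      have hdi : ∀ i, HasDerivAt (fun z => x z i) (d i) s :=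
        hasDerivAt_pi.1 (hode s hsIcc)
      set c : Fin n → ℝ := fun i =>
        if x s i < 0 then -(d i) else if x s i = 0 then max (-(d i)) 0 else 0 with hcdef
      have htend : Tendsto (fun z => (z - s)⁻¹ * (g z - g s)) (𝓝[>] s) (𝓝 (∑ i, c i)) := by
        have := tendsto_finset_sum Finset.univ
          (fun i _ => slope_negpart_tendsto (hdi i))
        refine Tendsto.congr (fun z => ?_) this
        simp only [hgdef, ← Finset.sum_sub_distrib, Finset.mul_sum]
      -- bound each c i by C * g s
      have hbound : ∀ i, c i ≤ C * g s := by
        intro i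
        have hneg : x s i ≤ 0 → -(d i) ≤ C * g s := by
          intro hxi
          have hd : -(d i) = ∑ j, M s i j * (-(x s j)) := by
            simp [hddef, Matrix.mulVec, dotProduct, ← Finset.sum_neg_distrib,
              mul_neg]
          rw [hd, hgdef, Finset.mul_sum]
          apply Finset.sum_le_sum
          intro j _
          rcases eq_or_ne j i with hji | hji
          · subst hji
            rw [max_eq_left (by linarith : (0:ℝ) ≤ -(x s j))]
            exact mul_le_mul_of_nonneg_right
              ((le_abs_self _).trans (hC s hsIcc j j)) (by linarith)
          · have hM : 0 ≤ M s i j := hMetzler s hsIcc i j (Ne.symm hji)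
            calc M s i j * (-(x s j)) ≤ M s i j * max (-(x s j)) 0 :=
                  mul_le_mul_of_nonneg_left (le_max_left _ _) hM
              _ ≤ C * max (-(x s j)) 0 :=
                  mul_le_mul_of_nonneg_right
                    ((le_abs_self _).trans (hC s hsIcc i j)) (le_max_right _ _)
        have hCg : 0 ≤ C * g s := mul_nonneg hCnn (hgnn s)
        rw [hcdef]
        rcases lt_trichotomy (x s i) 0 with h1 | h1 | h1
        · simpa [h1] using hneg h1.le
        · simp only [h1, lt_irrefl, if_false, if_true, if_pos rfl, lt_self_iff_false]
          exact max_le (hneg h1.le) hCg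
        · simp only [if_neg (not_lt.2 h1.le), if_neg (by linarith : x s i ≠ 0)]
          exact hCg
      have hsum : (∑ i, c i) < r := by
        calc (∑ i, c i) ≤ ∑ _i : Fin n, C * g s := Finset.sum_le_sum fun i _ => hbound i
          _ = (n * C) * g s := by simp [Finset.sum_const, Finset.card_univ]; ring
          _ < r := hr
      exact ((htend.eventually_lt_const hsum).filter_mono le_rfl).frequently
    · -- g 0 ≤ 0
      have : g 0 = 0 := by
        apply Finset.sum_eq_zero
        intro i _
        exact max_eq_right (by linarith [hx0 i])
      linarith [this.le]
    · intro s _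
      simp
  intro s hs i
  have h1 : g s ≤ 0 := by
    have := key s hs
    rwa [gronwallBound_ε0_δ0, ] at this
  have h2 : max (-(x s i)) 0 ≤ g s :=
    Finset.single_le_sum (f := fun j => max (-(x s j)) 0)
      (fun j _ => le_max_right _ _) (Finset.mem_univ i)
  have : max (-(x s i)) 0 = 0 := le_antisymm (h2.trans h1) (le_max_right _ _)
  have := le_max_left (-(x s i)) 0
  linarith [this.trans_eq ‹max (-(x s i)) 0 = 0›]
end

section
/- Let q be a positive vector and m a Metzler matrix. The function l(x) = ⟨q, mx⟩/⟨q, x⟩ on the positive orthant, viewed as a map from (K₊, d) (Hilbert's projective metric) to ℝ, is Lipschitz continuous with Lipschitz constant bounded above by sup_{x ∈ K \ {0}} inf_{a ∈ ℝ} ⟨q, |m − a·id| x⟩ / ⟨q, x⟩, where |·| denotes taking entrywise absolute values. -/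
open Finset Matrix

/-- Hilbert's projective metric on the open positive orthant of `ℝ^n`. -/
noncomputable def hilbertDist {n : ℕ} [NeZero n] (x y : Fin n → ℝ) : ℝ :=
  Real.log (Finset.univ.sup' Finset.univ_nonempty
    fun p : Fin n × Fin n => x p.1 * y p.2 / (x p.2 * y p.1))

/-!
Join `x` to `y` by the curve `w t = x ∘ exp (t c)` with `c = log (y / x)`, and let
`f t = ⟨q, m w⟩ / ⟨q, w⟩`. The numerator of `f'` is `⟨q, m (c w)⟩ ⟨q, w⟩ - ⟨q, m w⟩ ⟨q, c w⟩`,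
which is unchanged when `m` is replaced by `m - a • 1` and `c` by `c - s`. Choosing `s` in the
middle of the range of `c`, so that `|c - s| ≤ d(x, y) / 2`, and bounding both products
entrywise gives `|f' t| ≤ d(x, y) ⟨q, |m - a • 1| w⟩ / ⟨q, w⟩` for every `a`, and the mean value
theorem on `[0, 1]` concludes.
-/

section Matrix

variable {ι κ R : Type*} [Fintype ι] [CommRing R]

lemma mulVec_cross_eq_shift [DecidableEq ι] (q v w : ι → R) (m : Matrix ι ι R) (a s : R) :
    (q ⬝ᵥ m *ᵥ v) * (q ⬝ᵥ w) - (q ⬝ᵥ m *ᵥ w) * (q ⬝ᵥ v) =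
      (q ⬝ᵥ (m - a • 1) *ᵥ (v - s • w)) * (q ⬝ᵥ w)
        - (q ⬝ᵥ (m - a • 1) *ᵥ w) * (q ⬝ᵥ (v - s • w)) := by
  simp only [sub_mulVec, smul_mulVec, one_mulVec, mulVec_sub, mulVec_smul, dotProduct_sub,
    dotProduct_smul, smul_eq_mul]
  ring

variable [LinearOrder R] [IsStrictOrderedRing R]

lemma abs_dotProduct_le_of_abs_le {p u v : ι → R} (hp : 0 ≤ p) (huv : ∀ i, |u i| ≤ v i) :
    |p ⬝ᵥ u| ≤ p ⬝ᵥ v :=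
  calc |p ⬝ᵥ u| ≤ ∑ i, |p i * u i| := abs_sum_le_sum_abs _ _
    _ ≤ p ⬝ᵥ v := sum_le_sum fun i _ => by
      rw [abs_mul, abs_of_nonneg (hp i)]
      exact mul_le_mul_of_nonneg_left (huv i) (hp i)

lemma abs_mulVec_le_of_abs_le (B : Matrix κ ι R) {u v : ι → R} (huv : ∀ j, |u j| ≤ v j)
    (i : κ) : |(B *ᵥ u) i| ≤ (B.map abs *ᵥ v) i :=
  calc |(B *ᵥ u) i| ≤ ∑ j, |B i j * u j| := abs_sum_le_sum_abs _ _
    _ ≤ (B.map abs *ᵥ v) i := sum_le_sum fun j _ => by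
      rw [abs_mul]
      exact mul_le_mul_of_nonneg_left (huv j) (abs_nonneg _)

lemma abs_dotProduct_mulVec_le [Fintype κ] {q : κ → R} {u v : ι → R} (B : Matrix κ ι R)
    (hq : 0 ≤ q) (huv : ∀ j, |u j| ≤ v j) : |q ⬝ᵥ B *ᵥ u| ≤ q ⬝ᵥ B.map abs *ᵥ v :=
  abs_dotProduct_le_of_abs_le hq (abs_mulVec_le_of_abs_le B huv)

lemma map_abs_mulVec_nonneg (B : Matrix κ ι R) {v : ι → R} (hv : 0 ≤ v) :
    0 ≤ B.map abs *ᵥ v :=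
  fun _ => sum_nonneg fun j _ => mul_nonneg (abs_nonneg _) (hv j)

lemma abs_mulVec_cross_le [DecidableEq ι] {q v w : ι → R} {r s : R} (m : Matrix ι ι R) (a : R)
    (hq : 0 ≤ q) (hw : 0 ≤ w) (hv : ∀ j, |v j - s * w j| ≤ r * w j) :
    |(q ⬝ᵥ m *ᵥ v) * (q ⬝ᵥ w) - (q ⬝ᵥ m *ᵥ w) * (q ⬝ᵥ v)|
      ≤ 2 * r * (q ⬝ᵥ (m - a • 1).map abs *ᵥ w) * (q ⬝ᵥ w) := by
  rw [mulVec_cross_eq_shift q v w m a s]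
  set B := m - a • 1
  have hv' : ∀ j, |(v - s • w) j| ≤ (r • w) j := hv
  have hBv : |q ⬝ᵥ B *ᵥ (v - s • w)| ≤ r * (q ⬝ᵥ B.map abs *ᵥ w) := by
    simpa only [mulVec_smul, dotProduct_smul, smul_eq_mul] using
      abs_dotProduct_mulVec_le B hq hv'
  have hBw := abs_dotProduct_mulVec_le B hq fun j => (abs_of_nonneg (hw j)).le
  have hDv : |q ⬝ᵥ (v - s • w)| ≤ r * (q ⬝ᵥ w) := by
    simpa only [dotProduct_smul, smul_eq_mul] using abs_dotProduct_le_of_abs_le hq hv'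
  have hN : 0 ≤ q ⬝ᵥ B.map abs *ᵥ w :=
    dotProduct_nonneg_of_nonneg hq (map_abs_mulVec_nonneg B hw)
  have hD : 0 ≤ q ⬝ᵥ w := dotProduct_nonneg_of_nonneg hq hw
  calc _ ≤ |(q ⬝ᵥ B *ᵥ (v - s • w)) * (q ⬝ᵥ w)| + |(q ⬝ᵥ B *ᵥ w) * (q ⬝ᵥ (v - s • w))| :=
        abs_sub _ _
    _ = |q ⬝ᵥ B *ᵥ (v - s • w)| * (q ⬝ᵥ w) + |q ⬝ᵥ B *ᵥ w| * |q ⬝ᵥ (v - s • w)| := by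
        rw [abs_mul, abs_mul, abs_of_nonneg hD]
    _ ≤ r * (q ⬝ᵥ B.map abs *ᵥ w) * (q ⬝ᵥ w) + (q ⬝ᵥ B.map abs *ᵥ w) * (r * (q ⬝ᵥ w)) :=
        add_le_add (mul_le_mul_of_nonneg_right hBv hD) (mul_le_mul hBw hDv (abs_nonneg _) hN)
    _ = 2 * r * (q ⬝ᵥ B.map abs *ᵥ w) * (q ⬝ᵥ w) := by ring

lemma exists_forall_abs_sub_le_half {𝕜 : Type*} [Field 𝕜] [LinearOrder 𝕜]
    [IsStrictOrderedRing 𝕜] [Finite κ] [Nonempty κ] {c : κ → 𝕜} {d : 𝕜}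
    (hc : ∀ i j, c j - c i ≤ d) : ∃ s, ∀ j, |c j - s| ≤ d / 2 := by
  obtain ⟨imin, hmin⟩ := Finite.exists_min c
  obtain ⟨imax, hmax⟩ := Finite.exists_max c
  refine ⟨(c imin + c imax) / 2, fun j => abs_le.2 ⟨?_, ?_⟩⟩ <;>
    linarith [hc imin imax, hmin j, hmax j]

end Matrix

section Ratio

variable {ι : Type*} [Fintype ι]

lemma exists_dotProduct_le_mul_dotProduct (p : ι → ℝ) {q : ι → ℝ} (hq : ∀ i, 0 < q i) :
    ∃ K, 0 ≤ K ∧ ∀ z, 0 ≤ z → p ⬝ᵥ z ≤ K * (q ⬝ᵥ z) := by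
  set K := ∑ j, |p j| / q j
  have hterm : ∀ j, 0 ≤ |p j| / q j := fun j => div_nonneg (abs_nonneg _) (hq j).le
  have hpK : p ≤ K • q := fun j =>
    calc p j ≤ |p j| / q j * q j := by rw [div_mul_cancel₀ _ (hq j).ne']; exact le_abs_self _
      _ ≤ K * q j := mul_le_mul_of_nonneg_right
          (single_le_sum (fun i _ => hterm i) (mem_univ j)) (hq j).le
  refine ⟨K, sum_nonneg fun j _ => hterm j, fun z hz => ?_⟩
  rw [← smul_eq_mul, ← smul_dotProduct]
  exact dotProduct_le_dotProduct_of_nonneg_right hpK hz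

variable [DecidableEq ι]

noncomputable def absShiftRatio (q : ι → ℝ) (m : Matrix ι ι ℝ) (z : ι → ℝ) (a : ℝ) : ℝ :=
  q ⬝ᵥ ((m - a • (1 : Matrix ι ι ℝ)).map (fun r => |r|)).mulVec z / (q ⬝ᵥ z)

lemma absShiftRatio_nonneg {q z : ι → ℝ} (m : Matrix ι ι ℝ) (a : ℝ) (hq : 0 ≤ q) (hz : 0 ≤ z) :
    0 ≤ absShiftRatio q m z a :=
  div_nonneg (dotProduct_nonneg_of_nonneg hq (map_abs_mulVec_nonneg _ hz))
    (dotProduct_nonneg_of_nonneg hq hz)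

lemma bddAbove_range_iInf_absShiftRatio {q : ι → ℝ} (hq : ∀ i, 0 < q i) (m : Matrix ι ι ℝ) :
    BddAbove (Set.range fun z : {z : ι → ℝ // (∀ i, 0 ≤ z i) ∧ z ≠ 0} =>
      ⨅ a, absShiftRatio q m z.1 a) := by
  obtain ⟨K, hK, hle⟩ := exists_dotProduct_le_mul_dotProduct (q ᵥ* m.map abs) hq
  refine ⟨K, ?_⟩
  rintro _ ⟨⟨z, hz, -⟩, rfl⟩
  have hz : 0 ≤ z := hz
  have hq' : 0 ≤ q := fun i => (hq i).le
  calc ⨅ a, absShiftRatio q m z a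
      ≤ absShiftRatio q m z 0 :=
        ciInf_le ⟨0, by rintro _ ⟨a, rfl⟩; exact absShiftRatio_nonneg m a hq' hz⟩ 0
    _ ≤ K := by
      rw [absShiftRatio, zero_smul, sub_zero, dotProduct_mulVec]
      exact div_le_of_le_mul₀ (dotProduct_nonneg_of_nonneg hq' hz) hK (hle z hz)

lemma abs_mulVec_cross_div_le_iInf {q c w : ι → ℝ} {r s : ℝ} (m : Matrix ι ι ℝ) (hq : 0 ≤ q)
    (hw : 0 ≤ w) (hr : 0 ≤ r) (hc : ∀ j, |c j - s| ≤ r) :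
    |(q ⬝ᵥ m *ᵥ (c * w)) * (q ⬝ᵥ w) - (q ⬝ᵥ m *ᵥ w) * (q ⬝ᵥ (c * w))| / (q ⬝ᵥ w) ^ 2
      ≤ 2 * r * ⨅ a, absShiftRatio q m w a := by
  rw [Real.mul_iInf_of_nonneg (by positivity)]
  refine le_ciInf fun a => ?_
  have hcw : ∀ j, |(c * w) j - s * w j| ≤ r * w j := fun j => by
    rw [Pi.mul_apply, ← sub_mul, abs_mul, abs_of_nonneg (hw j)]
    exact mul_le_mul_of_nonneg_right (hc j) (hw j)
  have hnum := abs_mulVec_cross_le m a hq hw hcw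
  rw [absShiftRatio]
  rcases (dotProduct_nonneg_of_nonneg hq hw).eq_or_lt with hD | hD
  · simp [← hD]
  · rw [div_le_iff₀ (by positivity)]
    exact hnum.trans_eq (by field_simp)

end Ratio

section Deriv

variable {ι : Type*} [Fintype ι]

lemma HasDerivAt.const_dotProduct (p : ι → ℝ) {w : ℝ → ι → ℝ} {w' : ι → ℝ} {t : ℝ}
    (hw : HasDerivAt w w' t) : HasDerivAt (fun t => p ⬝ᵥ w t) (p ⬝ᵥ w') t :=
  HasDerivAt.fun_sum fun j _ => (hasDerivAt_pi.1 hw j).const_mul (p j)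

lemma HasDerivAt.dotProduct_mulVec_div (q : ι → ℝ) (m : Matrix ι ι ℝ) {w : ℝ → ι → ℝ}
    {w' : ι → ℝ} {t : ℝ} (hw : HasDerivAt w w' t) (hD : q ⬝ᵥ w t ≠ 0) :
    HasDerivAt (fun t => q ⬝ᵥ m *ᵥ w t / (q ⬝ᵥ w t))
      (((q ⬝ᵥ m *ᵥ w') * (q ⬝ᵥ w t) - (q ⬝ᵥ m *ᵥ w t) * (q ⬝ᵥ w')) / (q ⬝ᵥ w t) ^ 2) t := by
  have hN : HasDerivAt (fun t => q ⬝ᵥ m *ᵥ w t) (q ⬝ᵥ m *ᵥ w') t := by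
    simpa only [dotProduct_mulVec] using hw.const_dotProduct (q ᵥ* m)
  exact hN.div (hw.const_dotProduct q) hD

end Deriv

lemma hasDerivAt_mul_exp_mul {ι : Type*} (x c : ι → ℝ) (t : ℝ) :
    HasDerivAt (fun t j => x j * Real.exp (t * c j)) (c * fun j => x j * Real.exp (t * c j)) t :=
  hasDerivAt_pi.2 fun j => ((hasDerivAt_mul_const (c j)).exp.const_mul (x j)).congr_deriv <| by
    rw [Pi.mul_apply]; ring

lemma log_div_sub_log_div_le_hilbertDist {n : ℕ} [NeZero n] {x y : Fin n → ℝ}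
    (hx : ∀ i, 0 < x i) (hy : ∀ i, 0 < y i) (i j : Fin n) :
    Real.log (y j / x j) - Real.log (y i / x i) ≤ hilbertDist x y := by
  have hpos : 0 < x i * y j / (x j * y i) :=
    div_pos (mul_pos (hx i) (hy j)) (mul_pos (hx j) (hy i))
  calc Real.log (y j / x j) - Real.log (y i / x i) = Real.log (x i * y j / (x j * y i)) := by
        rw [← Real.log_div (div_pos (hy j) (hx j)).ne' (div_pos (hy i) (hx i)).ne']
        congr 1
        field_simp
    _ ≤ hilbertDist x y := Real.log_le_log hpos <|
        le_sup' (fun p : Fin n × Fin n => x p.1 * y p.2 / (x p.2 * y p.1)) (mem_univ (i, j))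

theorem lipschitz_bound_hilbert_general {n : ℕ} [NeZero n]
    (q : Fin n → ℝ) (hq : ∀ i, 0 < q i)
    (m : Matrix (Fin n) (Fin n) ℝ) :
    ∀ x y : Fin n → ℝ, (∀ i, 0 < x i) → (∀ i, 0 < y i) →
      |q ⬝ᵥ m.mulVec x / (q ⬝ᵥ x) - q ⬝ᵥ m.mulVec y / (q ⬝ᵥ y)| ≤
        (⨆ z : {z : Fin n → ℝ // (∀ i, 0 ≤ z i) ∧ z ≠ 0},
          ⨅ a : ℝ, q ⬝ᵥ ((m - a • (1 : Matrix (Fin n) (Fin n) ℝ)).map (fun r => |r|)).mulVec z.1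
            / (q ⬝ᵥ z.1)) * hilbertDist x y := by
  intro x y hx hy
  set L := ⨆ z : {z : Fin n → ℝ // (∀ i, 0 ≤ z i) ∧ z ≠ 0}, ⨅ a, absShiftRatio q m z.1 a
  set H := hilbertDist x y
  set c : Fin n → ℝ := fun j => Real.log (y j / x j)
  have hcH : ∀ i j, c j - c i ≤ H := log_div_sub_log_div_le_hilbertDist hx hy
  have hH : 0 ≤ H := by simpa using hcH 0 0
  obtain ⟨s, hs⟩ := exists_forall_abs_sub_le_half hcH
  set w : ℝ → Fin n → ℝ := fun t j => x j * Real.exp (t * c j)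
  have hw : ∀ t j, 0 < w t j := fun t j => mul_pos (hx j) (Real.exp_pos _)
  have hD : ∀ t, q ⬝ᵥ w t ≠ 0 := fun t =>
    (sum_pos (fun j _ => mul_pos (hq j) (hw t j)) univ_nonempty).ne'
  have hmvt : ‖q ⬝ᵥ m *ᵥ w 1 / (q ⬝ᵥ w 1) - q ⬝ᵥ m *ᵥ w 0 / (q ⬝ᵥ w 0)‖ ≤ L * H := by
    refine norm_image_sub_le_of_norm_deriv_le_segment_01' (fun t _ =>
      ((hasDerivAt_mul_exp_mul x c t).dotProduct_mulVec_div q m (hD t)).hasDerivWithinAt)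
      fun t _ => ?_
    rw [Real.norm_eq_abs, abs_div, abs_sq]
    calc _ ≤ 2 * (H / 2) * ⨅ a, absShiftRatio q m (w t) a :=
          abs_mulVec_cross_div_le_iInf m (fun i => (hq i).le) (fun j => (hw t j).le)
            (by positivity) hs
      _ ≤ L * H := by
        rw [mul_div_cancel₀ _ two_ne_zero, mul_comm L]
        exact mul_le_mul_of_nonneg_left (le_ciSup (bddAbove_range_iInf_absShiftRatio hq m)
          ⟨w t, fun j => (hw t j).le, fun h => (hw t 0).ne' (congrFun h 0)⟩) hH
  have hw0 : w 0 = x := by ext j; simp [w]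
  have hw1 : w 1 = y := by
    ext j; simp [w, c, Real.exp_log (div_pos (hy j) (hx j)), mul_div_cancel₀ _ (hx j).ne']
  rwa [Real.norm_eq_abs, hw0, hw1, abs_sub_comm] at hmvt

/-- The function `l(x) = ⟨q, m x⟩ / ⟨q, x⟩` is Lipschitz from the positive orthant
endowed with Hilbert's projective metric to `ℝ`, with Lipschitz constant bounded by
`sup_{x ∈ K \ {0}} inf_{a ∈ ℝ} ⟨q, |m - a·id| x⟩ / ⟨q, x⟩`. -/
theorem lipschitz_bound_hilbert {n : ℕ} [NeZero n]
    (q : Fin n → ℝ) (hq : ∀ i, 0 < q i)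
    (m : Matrix (Fin n) (Fin n) ℝ) (hm : IsMetzler m) :
    ∀ x y : Fin n → ℝ, (∀ i, 0 < x i) → (∀ i, 0 < y i) →
      |q ⬝ᵥ m.mulVec x / (q ⬝ᵥ x) - q ⬝ᵥ m.mulVec y / (q ⬝ᵥ y)| ≤
        (⨆ z : {z : Fin n → ℝ // (∀ i, 0 ≤ z i) ∧ z ≠ 0},
          ⨅ a : ℝ, q ⬝ᵥ ((m - a • (1 : Matrix (Fin n) (Fin n) ℝ)).map (fun r => |r|)).mulVec z.1
            / (q ⬝ᵥ z.1)) * hilbertDist x y :=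
  lipschitz_bound_hilbert_general q hq m
end

section
/- The optimal growth rate dominates every Perron eigenvalue: if (λ, u) satisfies λ t + u(y) = sup_M {∫₀ᵗ ℓ(y_M(s), M(s)) ds + u(y_M(t))} for all t ≥ 0 and all y in the simplex, with u bounded, then for every m ∈ 𝓜, λ ≥ λ(m), the Perron eigenvalue of m. -/
open Matrix Set

/-- The standard simplex in `ℝ^n`. -/
def simplexS (n : ℕ) : Set (Fin n → ℝ) := {y | (∀ i, 0 ≤ y i) ∧ ∑ i, y i = 1}

/-- The pay-off `ℓ(y,m) = ⟨1, m y⟩`. -/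
def ell {n : ℕ} (y : Fin n → ℝ) (m : Matrix (Fin n) (Fin n) ℝ) : ℝ :=
  (fun _ => (1 : ℝ)) ⬝ᵥ m.mulVec y

/-- The projected vector field `b(y,m) = m y - ℓ(y,m) y` on the simplex. -/
def bfield {n : ℕ} (y : Fin n → ℝ) (m : Matrix (Fin n) (Fin n) ℝ) : Fin n → ℝ :=
  m.mulVec y - ell y m • y

/-- Set of rewards over admissible controls with values in `𝓜`. -/
def rewardSet {n : ℕ} (𝓜 : Set (Matrix (Fin n) (Fin n) ℝ))
    (u : (Fin n → ℝ) → ℝ) (t : ℝ) (y : Fin n → ℝ) : Set ℝ :=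
  { r | ∃ (M : ℝ → Matrix (Fin n) (Fin n) ℝ) (γ : ℝ → Fin n → ℝ),
      (∀ s ∈ Icc 0 t, M s ∈ 𝓜) ∧ γ 0 = y ∧
      (∀ s ∈ Icc 0 t, HasDerivAt γ (bfield (γ s) (M s)) s) ∧
      r = (∫ s in (0:ℝ)..t, ell (γ s) (M s)) + u (γ t) }

/-- An irreducible matrix. -/
def IsIrreducibleMat {n : ℕ} (m : Matrix (Fin n) (Fin n) ℝ) : Prop :=
  ∀ I : Set (Fin n), I.Nonempty → Iᶜ.Nonempty → ∃ i ∈ I, ∃ j ∈ Iᶜ, 0 < m i j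

/-! The constant control `m` keeps the Perron vector `z_m` stationary and earns `λ(m) t + u(z_m)`,
so `λ ≥ λ(m)` once the supremum is known to be finite (an unbounded `sSup` would be the junk
value `0`). It is finite because every admissible trajectory stays in the simplex, where `ℓ` and
`u` are bounded. Invariance of the simplex follows from Grönwall's inequality, applied to
`∑ yᵢ - 1` and to `∑ min(yᵢ, 0)²`, whose growth the Metzler sign pattern controls. -/

open Filter Topology Asymptotics

theorem hasDerivAt_min_zero_sq (x : ℝ) :
    HasDerivAt (fun y : ℝ => min y 0 ^ 2) (2 * min x 0) x := by
  rcases lt_trichotomy x 0 with hx | rfl | hx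
  · have hev : (fun y : ℝ => min y 0 ^ 2) =ᶠ[𝓝 x] fun y => y ^ 2 := by
      filter_upwards [Iio_mem_nhds hx] with y hy
      rw [min_eq_left hy.le]
    rw [min_eq_left hx.le]
    simpa using (hasDerivAt_pow 2 x).congr_of_eventuallyEq hev
  · rw [hasDerivAt_iff_isLittleO, min_self, mul_zero]
    have hbig : (fun y : ℝ => min y 0 ^ 2) =O[𝓝 0] fun y => y ^ 2 :=
      IsBigO.of_bound 1 (Eventually.of_forall fun y => by
        rw [one_mul, norm_pow, norm_pow]
        exact pow_le_pow_left₀ (norm_nonneg _) (by rcases le_total y 0 with h | h <;> simp [h]) 2)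
    simpa using hbig.trans_isLittleO (isLittleO_pow_id one_lt_two)
  · have hev : (fun y : ℝ => min y 0 ^ 2) =ᶠ[𝓝 x] fun _ => 0 := by
      filter_upwards [Ioi_mem_nhds hx] with y hy
      simp [min_eq_right (mem_Ioi.mp hy).le]
    rw [min_eq_right hx.le, mul_zero]
    exact (hasDerivAt_const x 0).congr_of_eventuallyEq hev

theorem nonpos_of_hasDerivAt_le_mul {f f' : ℝ → ℝ} {K a b : ℝ}
    (hf : ∀ x ∈ Icc a b, HasDerivAt f (f' x) x) (ha : f a ≤ 0)
    (bound : ∀ x ∈ Ico a b, f' x ≤ K * f x) : ∀ x ∈ Icc a b, f x ≤ 0 := by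
  intro x hx
  have hslope : ∀ x ∈ Ico a b, ∀ r, f' x < r →
      ∃ᶠ z in 𝓝[>] x, (z - x)⁻¹ * (f z - f x) < r :=
    fun x hx _ hr => (hf x (Ico_subset_Icc_self hx)).hasDerivWithinAt.liminf_right_slope_le hr
  simpa [gronwallBound_ε0_δ0] using le_gronwallBound_of_liminf_deriv_right_le (K := K) (ε := 0)
    (fun y hy => (hf y hy).continuousAt.continuousWithinAt) hslope ha
    (fun y hy => by simpa using bound y hy) x hx

section Simplex

variable {n : ℕ} {m : Matrix (Fin n) (Fin n) ℝ}

theorem sum_bfield (y : Fin n → ℝ) :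
    ∑ i, bfield y m i = ell y m * (1 - ∑ i, y i) := by
  simp only [bfield, ell, dotProduct, one_mul, Pi.sub_apply, Pi.smul_apply, smul_eq_mul,
    Finset.sum_sub_distrib, ← Finset.mul_sum]
  ring

theorem abs_ell_le {K R : ℝ} (hK : ∀ i j, |m i j| ≤ K)
    {y : Fin n → ℝ} (hy : ‖y‖ ≤ R) : |ell y m| ≤ n ^ 2 * K * R := by
  have hterm : ∀ i j, |m i j * y j| ≤ K * R := fun i j => by
    rw [abs_mul]
    exact mul_le_mul (hK i j) ((norm_le_pi_norm y j).trans hy) (abs_nonneg _)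
      ((abs_nonneg _).trans (hK i j))
  calc |ell y m| = |∑ i, ∑ j, m i j * y j| := by simp [ell, dotProduct, mulVec]
    _ ≤ ∑ i, ∑ j, |m i j * y j| :=
      (Finset.abs_sum_le_sum_abs _ _).trans
        (Finset.sum_le_sum fun i _ => Finset.abs_sum_le_sum_abs _ _)
    _ ≤ ∑ _i : Fin n, ∑ _j : Fin n, K * R :=
      Finset.sum_le_sum fun i _ => Finset.sum_le_sum fun j _ => hterm i j
    _ = n ^ 2 * K * R := by simp; ring

theorem norm_le_one_of_mem_simplexS {y : Fin n → ℝ} (hy : y ∈ simplexS n) : ‖y‖ ≤ 1 :=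
  (pi_norm_le_iff_of_nonneg zero_le_one).2 fun i => by
    rw [Real.norm_of_nonneg (hy.1 i), ← hy.2]
    exact Finset.single_le_sum (fun j _ => hy.1 j) (Finset.mem_univ i)

theorem ell_eq_of_mulVec_eq_smul {z : Fin n → ℝ} {μ : ℝ}
    (hz : z ∈ simplexS n) (h : m *ᵥ z = μ • z) : ell z m = μ := by
  simp [ell, h, dotProduct, ← Finset.mul_sum, hz.2]

theorem bfield_eq_zero_of_mulVec_eq_smul {z : Fin n → ℝ} {μ : ℝ}
    (hz : z ∈ simplexS n) (h : m *ᵥ z = μ • z) : bfield z m = 0 := by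
  rw [bfield, ell_eq_of_mulVec_eq_smul hz h, h, sub_self]

theorem min_zero_mul_self (x : ℝ) : min x 0 * x = min x 0 ^ 2 := by
  rcases le_total x 0 with h | h <;> simp [h, sq]

theorem min_zero_mul_entry_le (hm : IsMetzler m) {K : ℝ}
    (hK : ∀ i j, m i j ≤ K) (y : Fin n → ℝ) (i j : Fin n) :
    min (y i) 0 * (m i j * y j) ≤ K * (min (y i) 0 ^ 2 + min (y j) 0 ^ 2) / 2 := by
  by_cases hij : i = j
  · subst hij
    rw [mul_left_comm, min_zero_mul_self]
    linarith [mul_le_mul_of_nonneg_right (hK i i) (sq_nonneg (min (y i) 0))]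
  · have ha : min (y i) 0 ≤ 0 := min_le_right _ _
    have hb : min (y j) 0 ≤ 0 := min_le_right _ _
    have hby : min (y j) 0 ≤ y j := min_le_left _ _
    have hc : 0 ≤ m i j := hm i j hij
    have hac : min (y i) 0 * m i j ≤ 0 := mul_nonpos_of_nonpos_of_nonneg ha hc
    nlinarith [hK i j, mul_nonneg_of_nonpos_of_nonpos ha hb, sq_nonneg (min (y i) 0 - min (y j) 0)]

theorem sum_min_zero_mul_mulVec_le (hm : IsMetzler m) {K : ℝ}
    (hK : ∀ i j, m i j ≤ K) (y : Fin n → ℝ) :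
    ∑ i, min (y i) 0 * (m *ᵥ y) i ≤ n * K * ∑ i, min (y i) 0 ^ 2 :=
  calc ∑ i, min (y i) 0 * (m *ᵥ y) i = ∑ i, ∑ j, min (y i) 0 * (m i j * y j) := by
        simp [mulVec, dotProduct, Finset.mul_sum]
    _ ≤ ∑ i, ∑ j, K * (min (y i) 0 ^ 2 + min (y j) 0 ^ 2) / 2 :=
        Finset.sum_le_sum fun i _ => Finset.sum_le_sum fun j _ => min_zero_mul_entry_le hm hK y i j
    _ = n * K * ∑ i, min (y i) 0 ^ 2 := by
        simp only [mul_add, add_div, Finset.sum_add_distrib, Finset.sum_const, Finset.card_univ,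
          Fintype.card_fin, nsmul_eq_mul, ← Finset.sum_div, ← Finset.mul_sum]
        ring

end Simplex

section Invariance

variable {n : ℕ} {b L : ℝ} {M : ℝ → Matrix (Fin n) (Fin n) ℝ} {γ : ℝ → Fin n → ℝ}

theorem sum_eq_one_of_hasDerivAt_bfield (hL : ∀ s ∈ Icc 0 b, |ell (γ s) (M s)| ≤ L)
    (hγ : ∀ s ∈ Icc 0 b, HasDerivAt γ (bfield (γ s) (M s)) s) (h0 : ∑ i, γ 0 i = 1) :
    ∀ s ∈ Icc 0 b, ∑ i, γ s i = 1 := by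
  have hd : ∀ s ∈ Icc 0 b, HasDerivAt (fun τ => ∑ i, γ τ i - 1)
      (-ell (γ s) (M s) * (∑ i, γ s i - 1)) s := fun s hs =>
    ((HasDerivAt.fun_sum fun i _ => hasDerivAt_pi.1 (hγ s hs) i).sub_const 1).congr_deriv
      (by rw [sum_bfield]; ring)
  have hzero := eq_zero_of_abs_deriv_le_mul_abs_self_of_eq_zero_right (K := L)
    (fun s hs => (hd s hs).continuousAt.continuousWithinAt)
    (fun s hs => (hd s (Ico_subset_Icc_self hs)).hasDerivWithinAt) (by simp [h0])
    (fun s hs => by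
      rw [norm_mul, norm_neg]
      exact mul_le_mul_of_nonneg_right (hL s (Ico_subset_Icc_self hs)) (norm_nonneg _))
  exact fun s hs => sub_eq_zero.mp (hzero s hs)

theorem nonneg_of_hasDerivAt_bfield {K : ℝ} (hM : ∀ s ∈ Icc 0 b, IsMetzler (M s))
    (hK : ∀ s ∈ Icc 0 b, ∀ i j, M s i j ≤ K)
    (hL : ∀ s ∈ Icc 0 b, |ell (γ s) (M s)| ≤ L)
    (hγ : ∀ s ∈ Icc 0 b, HasDerivAt γ (bfield (γ s) (M s)) s) (h0 : ∀ i, 0 ≤ γ 0 i) :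
    ∀ s ∈ Icc 0 b, ∀ i, 0 ≤ γ s i := by
  set h : ℝ → ℝ := fun τ => ∑ i, min (γ τ i) 0 ^ 2 with h_def
  set h' : ℝ → ℝ := fun τ => ∑ i, 2 * min (γ τ i) 0 * bfield (γ τ) (M τ) i
  have hd : ∀ s ∈ Icc 0 b, HasDerivAt h (h' s) s := fun s hs =>
    HasDerivAt.fun_sum fun i _ => (hasDerivAt_min_zero_sq _).comp s (hasDerivAt_pi.1 (hγ s hs) i)
  have hh' : ∀ s,
      h' s = 2 * ∑ i, min (γ s i) 0 * (M s *ᵥ γ s) i - 2 * ell (γ s) (M s) * h s := by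
    intro s
    simp only [h', h_def, bfield, Pi.sub_apply, Pi.smul_apply, smul_eq_mul, Finset.mul_sum,
      ← Finset.sum_sub_distrib, ← min_zero_mul_self]
    exact Finset.sum_congr rfl fun i _ => by ring
  have hbound : ∀ s ∈ Ico 0 b, h' s ≤ 2 * (n * K + L) * h s := fun s hs => by
    have hs := Ico_subset_Icc_self hs
    have hMy := sum_min_zero_mul_mulVec_le (hM s hs) (hK s hs) (γ s)
    have hh : 0 ≤ h s := Finset.sum_nonneg fun i _ => sq_nonneg _
    rw [hh']
    nlinarith [(abs_le.mp (hL s hs)).1]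
  have hle := nonpos_of_hasDerivAt_le_mul hd (by simp [h_def, h0]) hbound
  intro s hs i
  have hzero := (Finset.sum_eq_zero_iff_of_nonneg fun j _ => sq_nonneg (min (γ s j) 0)).mp
    (le_antisymm (hle s hs) (Finset.sum_nonneg fun j _ => sq_nonneg _)) i (Finset.mem_univ i)
  exact min_eq_right_iff.mp (pow_eq_zero_iff two_ne_zero |>.mp hzero)

theorem mem_simplexS_of_hasDerivAt_bfield {K : ℝ} (hM : ∀ s ∈ Icc 0 b, IsMetzler (M s))
    (hK : ∀ s ∈ Icc 0 b, ∀ i j, |M s i j| ≤ K)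
    (hγ : ∀ s ∈ Icc 0 b, HasDerivAt γ (bfield (γ s) (M s)) s) (h0 : γ 0 ∈ simplexS n) :
    ∀ s ∈ Icc 0 b, γ s ∈ simplexS n := by
  obtain ⟨R, hR⟩ := isCompact_Icc.exists_bound_of_continuousOn
    fun s hs => (hγ s hs).continuousAt.continuousWithinAt
  have hL : ∀ s ∈ Icc 0 b, |ell (γ s) (M s)| ≤ n ^ 2 * K * R :=
    fun s hs => abs_ell_le (hK s hs) (hR s hs)
  have hK' : ∀ s ∈ Icc 0 b, ∀ i j, M s i j ≤ K := fun s hs i j => le_of_abs_le (hK s hs i j)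
  exact fun s hs => ⟨nonneg_of_hasDerivAt_bfield hM hK' hL hγ h0.1 s hs,
    sum_eq_one_of_hasDerivAt_bfield hL hγ h0.2 s hs⟩

end Invariance

section Reward

variable {n : ℕ} {𝓜 : Set (Matrix (Fin n) (Fin n) ℝ)} {u : (Fin n → ℝ) → ℝ}

theorem IsCompact.exists_abs_entry_le (h𝓜 : IsCompact 𝓜) :
    ∃ K, ∀ m ∈ 𝓜, ∀ i j, |m i j| ≤ K := by
  obtain ⟨K, hK⟩ := h𝓜.exists_bound_of_continuousOn
    (f := fun m : Matrix (Fin n) (Fin n) ℝ => (fun i j => m i j : Fin n → Fin n → ℝ))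
    (by fun_prop)
  refine ⟨K, fun m hm i j => ?_⟩
  rw [← Real.norm_eq_abs]
  exact ((norm_le_pi_norm (m i) j).trans (norm_le_pi_norm (fun i j => m i j) i)).trans (hK m hm)

theorem mem_rewardSet_of_mulVec_eq_smul {m : Matrix (Fin n) (Fin n) ℝ} (hm : m ∈ 𝓜)
    {z : Fin n → ℝ} {μ : ℝ} (hz : z ∈ simplexS n) (h : m *ᵥ z = μ • z) (t : ℝ) :
    μ * t + u z ∈ rewardSet 𝓜 u t z := by
  refine ⟨fun _ => m, fun _ => z, fun _ _ => hm, rfl, fun s _ => ?_, ?_⟩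
  · rw [bfield_eq_zero_of_mulVec_eq_smul hz h]
    exact hasDerivAt_const s z
  · simp [ell_eq_of_mulVec_eq_smul hz h, mul_comm]

theorem rewardSet_subset_Iic (hMetz : ∀ m ∈ 𝓜, IsMetzler m) {K : ℝ}
    (hK : ∀ m ∈ 𝓜, ∀ i j, |m i j| ≤ K) {C : ℝ} (hu : ∀ y ∈ simplexS n, u y ≤ C)
    {t : ℝ} (ht : 0 ≤ t) {y : Fin n → ℝ} (hy : y ∈ simplexS n) :
    rewardSet 𝓜 u t y ⊆ Iic (n ^ 2 * K * t + C) := by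
  rintro r ⟨M, γ, hM, rfl, hγ, rfl⟩
  have hinv := mem_simplexS_of_hasDerivAt_bfield (fun s hs => hMetz _ (hM s hs))
    (fun s hs => hK _ (hM s hs)) hγ hy
  have hint : ‖∫ s in (0 : ℝ)..t, ell (γ s) (M s)‖ ≤ n ^ 2 * K * 1 * |t - 0| :=
    intervalIntegral.norm_integral_le_of_norm_le_const fun s hs => by
      rw [uIoc_of_le ht] at hs
      have hs' : s ∈ Icc 0 t := Ioc_subset_Icc_self hs
      exact abs_ell_le (hK _ (hM s hs')) (norm_le_one_of_mem_simplexS (hinv s hs'))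
  rw [sub_zero, abs_of_nonneg ht, mul_one] at hint
  exact add_le_add ((le_abs_self _).trans hint) (hu _ (hinv t ⟨ht, le_rfl⟩))

end Reward

theorem growth_rate_ge_perron_general {n : ℕ} (𝓜 : Set (Matrix (Fin n) (Fin n) ℝ))
    (hcomp : IsCompact 𝓜)
    (hMetz : ∀ m ∈ 𝓜, IsMetzler m)
    (lam : ℝ) (u : (Fin n → ℝ) → ℝ)
    (hfp : ∀ t ≥ (0 : ℝ), ∀ y ∈ simplexS n,
      lam * t + u y = sSup (rewardSet 𝓜 u t y))
    (hu : ∃ C : ℝ, ∀ y ∈ simplexS n, |u y| ≤ C)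
    (m : Matrix (Fin n) (Fin n) ℝ) (hm : m ∈ 𝓜)
    (lm : ℝ) (zm : Fin n → ℝ) (hzm : zm ∈ simplexS n)
    (heig : m.mulVec zm = lm • zm) :
    lm ≤ lam := by
  obtain ⟨C, hC⟩ := hu
  obtain ⟨K, hK⟩ := hcomp.exists_abs_entry_le
  have hbdd : BddAbove (rewardSet 𝓜 u 1 zm) :=
    ⟨_, rewardSet_subset_Iic hMetz hK (fun y hy => le_of_abs_le (hC y hy)) zero_le_one hzm⟩
  have hle := le_csSup hbdd (mem_rewardSet_of_mulVec_eq_smul hm hzm heig 1)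
  rw [← hfp 1 zero_le_one zm hzm] at hle
  linarith

/-- The optimal growth rate dominates every Perron eigenvalue of a matrix in `𝓜`. -/
theorem growth_rate_ge_perron {n : ℕ} (𝓜 : Set (Matrix (Fin n) (Fin n) ℝ))
    (hcomp : IsCompact 𝓜) (hconv : Convex ℝ 𝓜)
    (hMetz : ∀ m ∈ 𝓜, IsMetzler m) (hirr : ∀ m ∈ 𝓜, IsIrreducibleMat m)
    (lam : ℝ) (u : (Fin n → ℝ) → ℝ)
    (hfp : ∀ t ≥ (0 : ℝ), ∀ y ∈ simplexS n,
      lam * t + u y = sSup (rewardSet 𝓜 u t y))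
    (hu : ∃ C : ℝ, ∀ y ∈ simplexS n, |u y| ≤ C)
    (m : Matrix (Fin n) (Fin n) ℝ) (hm : m ∈ 𝓜)
    (lm : ℝ) (zm : Fin n → ℝ) (hzm : zm ∈ simplexS n)
    (heig : m.mulVec zm = lm • zm) :
    lm ≤ lam :=
  growth_rate_ge_perron_general 𝓜 hcomp hMetz lam u hfp hu m hm lm zm hzm heig
end
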